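/- Let r₁,…,rₙ ∈ ℂ be distinct with positive integers m₁,…,mₙ, let s₁,…,s_p ∈ ℂ be distinct with positive integers k₁,…,k_p, and let f and g be the corresponding reduced Newton maps. Then the following are equivalent: (i) there exist a ∈ ℂ∖{0} and b ∈ ℂ such that g(az+b) = a·f(z) + b for every z ∈ ℂ outside a finite set (on which all denominators are nonzero); (ii) there exist a ∈ ℂ∖{0}, b ∈ ℂ and a bijection σ of the index sets such that a·rᵢ + b = s_{σ(i)} and mᵢ = k_{σ(i)} for every i. That is, two (possibly degenerate) Newton maps are affinely conjugate if and only if some affine map carries the fixed points of one to the fixed points of the other matching the corresponding multiplicities (depths plus one). -/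

import Mathlib

/-!
Write `P(z) = ∏ (z - rᵢ)` and `D_r` for the denominator. Clearing denominators, conjugacy off a
finite set becomes the identity `P_s(az + b) · D_r(z) = a · P_r(z) · D_s(az + b)` of continuous
functions, hence it holds everywhere. Since `D_r(rᵢ) = mᵢ ∏_{j ≠ i} (rᵢ - rⱼ) ≠ 0`, evaluating at
the roots shows that `z ↦ az + b` maps `{rᵢ}` bijectively onto `{sⱼ}`. Then
`P_s(az + b) = aⁿ P_r(z)`, so `D_s(az + b) = aⁿ⁻¹ D_r(z)`, and comparing the values at `rᵢ`
recovers the multiplicities.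
-/

open Finset

/-- The denominator `∑ i, m i * ∏_{j ≠ i} (z - r j)` of the reduced Newton map. -/
noncomputable def newtonDenom (n : ℕ) (r : Fin n → ℂ) (m : Fin n → ℕ) (z : ℂ) : ℂ :=
  ∑ i : Fin n, (m i : ℂ) * ∏ j ∈ univ.erase i, (z - r j)

/-- The reduced Newton map `z - ∏ j (z - r j) / ∑ i, m i * ∏_{j ≠ i} (z - r j)`. -/
noncomputable def reducedNewton (n : ℕ) (r : Fin n → ℂ) (m : Fin n → ℕ) (z : ℂ) : ℂ :=
  z - (∏ j : Fin n, (z - r j)) / newtonDenom n r m z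

@[fun_prop]
lemma continuous_newtonDenom (n : ℕ) (r : Fin n → ℂ) (m : Fin n → ℕ) :
    Continuous (newtonDenom n r m) := by
  unfold newtonDenom
  fun_prop

lemma newtonDenom_apply_root (n : ℕ) (r : Fin n → ℂ) (m : Fin n → ℕ) (i : Fin n) :
    newtonDenom n r m (r i) = m i * ∏ j ∈ univ.erase i, (r i - r j) := by
  refine Finset.sum_eq_single i (fun j _ hji => ?_) (by simp)
  rw [Finset.prod_eq_zero (Finset.mem_erase.2 ⟨Ne.symm hji, mem_univ i⟩) (sub_self _), mul_zero]

lemma prod_erase_sub_ne_zero {n : ℕ} {r : Fin n → ℂ} (hr : Function.Injective r) (i : Fin n) :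
    ∏ j ∈ univ.erase i, (r i - r j) ≠ 0 :=
  Finset.prod_ne_zero_iff.2 fun _ hj => sub_ne_zero.2 fun h => (Finset.mem_erase.1 hj).1 (hr h).symm

lemma newtonDenom_apply_root_ne_zero {n : ℕ} {r : Fin n → ℂ} (hr : Function.Injective r)
    {m : Fin n → ℕ} (hm : ∀ i, 0 < m i) (i : Fin n) : newtonDenom n r m (r i) ≠ 0 := by
  rw [newtonDenom_apply_root]
  exact mul_ne_zero (Nat.cast_ne_zero.2 (hm i).ne') (prod_erase_sub_ne_zero hr i)

lemma newtonDenom_injective {n : ℕ} {r : Fin n → ℂ} (hr : Function.Injective r)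
    {m m' : Fin n → ℕ} (h : ∀ z, newtonDenom n r m z = newtonDenom n r m' z) : m = m' := by
  funext i
  have hi := h (r i)
  rw [newtonDenom_apply_root, newtonDenom_apply_root] at hi
  exact_mod_cast mul_right_cancel₀ (prod_erase_sub_ne_zero hr i) hi

lemma exists_finset_newtonDenom_ne_zero {n : ℕ} (hn : 1 ≤ n) {r : Fin n → ℂ}
    (hr : Function.Injective r) {m : Fin n → ℕ} (hm : ∀ i, 0 < m i) :
    ∃ F : Finset ℂ, ∀ z ∉ F, newtonDenom n r m z ≠ 0 := by
  let D : Polynomial ℂ :=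
    ∑ i, Polynomial.C (m i : ℂ) * ∏ j ∈ univ.erase i, (Polynomial.X - Polynomial.C (r j))
  have hD : ∀ z, D.eval z = newtonDenom n r m z := fun z => by
    simp [D, newtonDenom, Polynomial.eval_finsetSum, Polynomial.eval_prod]
  have hD0 : D ≠ 0 := fun h => newtonDenom_apply_root_ne_zero hr hm ⟨0, hn⟩ (by simp [← hD, h])
  exact ⟨(Polynomial.finite_setOfPred_isRoot hD0).toFinset, fun z hz => by simpa [← hD] using hz⟩

lemma eq_of_eq_off_finset {Y : Type*} [TopologicalSpace Y] [T2Space Y] {f g : ℂ → Y}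
    (hf : Continuous f) (hg : Continuous g) (F : Finset ℂ) (h : ∀ z ∉ F, f z = g z) : f = g :=
  hf.ext_on ((F : Set ℂ).toFinite.countable.dense_compl ℂ) hg fun z hz => h z hz

section AffineTransport

variable {n p : ℕ} {a b : ℂ} {r : Fin n → ℂ} {s : Fin p → ℂ}

lemma prod_sub_affine (σ : Fin n ≃ Fin p) (hσ : ∀ i, a * r i + b = s (σ i)) (z : ℂ) :
    ∏ j, (a * z + b - s j) = a ^ n * ∏ i, (z - r i) := by
  rw [← σ.prod_comp]
  simp_rw [← hσ, show ∀ i, a * z + b - (a * r i + b) = a * (z - r i) from fun i => by ring]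
  rw [prod_mul_distrib, prod_const, card_univ, Fintype.card_fin]

lemma prod_erase_sub_affine (σ : Fin n ≃ Fin p) (hσ : ∀ i, a * r i + b = s (σ i)) (i : Fin n)
    (z : ℂ) :
    ∏ j ∈ univ.erase (σ i), (a * z + b - s j) = a ^ (n - 1) * ∏ l ∈ univ.erase i, (z - r l) := by
  rw [← σ.coe_toEmbedding, ← map_univ_equiv σ, ← map_erase, prod_map]
  simp_rw [Equiv.coe_toEmbedding, ← hσ,
    show ∀ l, a * z + b - (a * r l + b) = a * (z - r l) from fun l => by ring]
  rw [prod_mul_distrib, prod_const, card_erase_of_mem (mem_univ i), card_univ, Fintype.card_fin]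

lemma newtonDenom_affine (σ : Fin n ≃ Fin p) (hσ : ∀ i, a * r i + b = s (σ i))
    {m : Fin n → ℕ} {k : Fin p → ℕ} (hmk : ∀ i, m i = k (σ i)) (z : ℂ) :
    newtonDenom p s k (a * z + b) = a ^ (n - 1) * newtonDenom n r m z := by
  unfold newtonDenom
  rw [← σ.sum_comp, mul_sum]
  refine sum_congr rfl fun i _ => ?_
  rw [prod_erase_sub_affine σ hσ, hmk]
  ring

lemma reducedNewton_affine (hn : 1 ≤ n) (ha : a ≠ 0) {m : Fin n → ℕ} {k : Fin p → ℕ}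
    (σ : Fin n ≃ Fin p) (hσ : ∀ i, a * r i + b = s (σ i)) (hmk : ∀ i, m i = k (σ i)) {z : ℂ}
    (hz : newtonDenom n r m z ≠ 0) :
    reducedNewton p s k (a * z + b) = a * reducedNewton n r m z + b := by
  unfold reducedNewton
  rw [newtonDenom_affine σ hσ hmk, prod_sub_affine σ hσ, ← mul_pow_sub_one (by omega) a]
  field_simp
  ring

end AffineTransport

section Conjugacy

variable {n p : ℕ} {a b : ℂ} {r : Fin n → ℂ} {m : Fin n → ℕ} {s : Fin p → ℂ} {k : Fin p → ℕ}

lemma prod_mul_newtonDenom_eq_of_conj {F : Finset ℂ} (hF : ∀ z ∉ F,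
      newtonDenom n r m z ≠ 0 ∧ newtonDenom p s k (a * z + b) ≠ 0 ∧
        reducedNewton p s k (a * z + b) = a * reducedNewton n r m z + b) (z : ℂ) :
    (∏ j, (a * z + b - s j)) * newtonDenom n r m z =
      a * (∏ i, (z - r i)) * newtonDenom p s k (a * z + b) := by
  refine congrFun (eq_of_eq_off_finset
    (f := fun z => (∏ j, (a * z + b - s j)) * newtonDenom n r m z)
    (g := fun z => a * (∏ i, (z - r i)) * newtonDenom p s k (a * z + b))
    (by fun_prop) (by fun_prop) F fun z hz => ?_) z
  obtain ⟨hD, hE, hconj⟩ := hF z hz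
  unfold reducedNewton at hconj
  field_simp at hconj
  linear_combination -hconj

variable (hconj : ∀ z, (∏ j, (a * z + b - s j)) * newtonDenom n r m z =
      a * (∏ i, (z - r i)) * newtonDenom p s k (a * z + b))
include hconj

lemma exists_root_eq_affine_root (hr : Function.Injective r) (hm : ∀ i, 0 < m i) (i : Fin n) :
    ∃ j, a * r i + b = s j := by
  have h := hconj (r i)
  rw [prod_eq_zero (mem_univ i) (sub_self _), mul_zero, zero_mul] at h
  obtain ⟨j, -, hj⟩ := prod_eq_zero_iff.1 <|
    (mul_eq_zero.1 h).resolve_right (newtonDenom_apply_root_ne_zero hr hm i)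
  exact ⟨j, sub_eq_zero.1 hj⟩

lemma exists_affine_root_eq_root (ha : a ≠ 0) (hs : Function.Injective s) (hk : ∀ j, 0 < k j)
    (j : Fin p) : ∃ i, a * r i + b = s j := by
  have hz : a * ((s j - b) / a) + b = s j := by field_simp; ring
  have h := hconj ((s j - b) / a)
  rw [prod_eq_zero (mem_univ j) (by rw [hz, sub_self]), zero_mul, hz] at h
  obtain ⟨i, -, hi⟩ := prod_eq_zero_iff.1 <| (mul_eq_zero.1 <|
    (mul_eq_zero.1 h.symm).resolve_right (newtonDenom_apply_root_ne_zero hs hk j)).resolve_left ha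
  exact ⟨i, by rw [← sub_eq_zero.1 hi, hz]⟩

lemma newtonDenom_affine_of_conj (hn : 1 ≤ n) (ha : a ≠ 0) (σ : Fin n ≃ Fin p)
    (hσ : ∀ i, a * r i + b = s (σ i)) (z : ℂ) :
    newtonDenom p s k (a * z + b) = a ^ (n - 1) * newtonDenom n r m z := by
  refine congrFun (eq_of_eq_off_finset (f := fun z => newtonDenom p s k (a * z + b))
    (g := fun z => a ^ (n - 1) * newtonDenom n r m z)
    (by fun_prop) (by fun_prop) (univ.image r) fun z hz => ?_) z
  have hP : ∏ i, (z - r i) ≠ 0 :=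
    prod_ne_zero_iff.2 fun i _ => sub_ne_zero.2 fun h => hz (h ▸ mem_image_of_mem r (mem_univ i))
  apply mul_left_cancel₀ (mul_ne_zero ha hP)
  have h := hconj z
  rw [prod_sub_affine σ hσ, ← mul_pow_sub_one (by omega) a] at h
  linear_combination -h

end Conjugacy

lemma Function.Injective.exists_equiv_of_comp_eq {α β ι κ : Type*} {φ : α → β}
    (hφ : Function.Injective φ) {r : ι → α} (hr : Function.Injective r) {s : κ → β}
    (hs : Function.Injective s) (hrs : ∀ i, ∃ j, φ (r i) = s j) (hsr : ∀ j, ∃ i, φ (r i) = s j) :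
    ∃ σ : ι ≃ κ, ∀ i, φ (r i) = s (σ i) := by
  choose σ hσ using hrs
  refine ⟨Equiv.ofBijective σ ⟨fun i i' h => hr <| hφ ?_, fun j => ?_⟩, hσ⟩
  · rw [hσ, hσ, h]
  · obtain ⟨i, hi⟩ := hsr j
    exact ⟨i, hs (by rw [← hσ, hi])⟩

theorem newton_maps_affinely_conjugate_iff_general
    (n p : ℕ) (hn : 1 ≤ n)
    (r : Fin n → ℂ) (hr : Function.Injective r)
    (m : Fin n → ℕ) (hm : ∀ i, 0 < m i)
    (s : Fin p → ℂ) (hs : Function.Injective s)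
    (k : Fin p → ℕ) (hk : ∀ j, 0 < k j) :
    (∃ a b : ℂ, a ≠ 0 ∧ ∃ F : Finset ℂ, ∀ z : ℂ, z ∉ F →
        newtonDenom n r m z ≠ 0 ∧
        newtonDenom p s k (a * z + b) ≠ 0 ∧
        reducedNewton p s k (a * z + b) = a * reducedNewton n r m z + b) ↔
    (∃ a b : ℂ, a ≠ 0 ∧ ∃ σ : Fin n ≃ Fin p,
        ∀ i, a * r i + b = s (σ i) ∧ m i = k (σ i)) := by
  constructor
  · rintro ⟨a, b, ha, F, hF⟩
    have hconj := prod_mul_newtonDenom_eq_of_conj hF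
    have haff : Function.Injective fun z => a * z + b :=
      fun _ _ h => mul_left_cancel₀ ha (add_right_cancel h)
    obtain ⟨σ, hσ⟩ := haff.exists_equiv_of_comp_eq hr hs
      (exists_root_eq_affine_root hconj hr hm) (exists_affine_root_eq_root hconj ha hs hk)
    have hmk : m = k ∘ σ := by
      refine newtonDenom_injective hr fun z => mul_left_cancel₀ (pow_ne_zero (n - 1) ha) ?_
      rw [← newtonDenom_affine_of_conj hconj hn ha σ hσ]
      exact newtonDenom_affine σ hσ (fun _ => rfl) z
    exact ⟨a, b, ha, σ, fun i => ⟨hσ i, congrFun hmk i⟩⟩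
  · rintro ⟨a, b, ha, σ, hσ⟩
    obtain ⟨F, hF⟩ := exists_finset_newtonDenom_ne_zero hn hr hm
    refine ⟨a, b, ha, F, fun z hz => ⟨hF z hz, ?_, ?_⟩⟩
    · rw [newtonDenom_affine σ (fun i => (hσ i).1) (fun i => (hσ i).2)]
      exact mul_ne_zero (pow_ne_zero _ ha) (hF z hz)
    · exact reducedNewton_affine hn ha σ (fun i => (hσ i).1) (fun i => (hσ i).2) (hF z hz)

/-- Two (possibly degenerate) Newton maps, given by root data `(r, m)` and `(s, k)`,
are affinely conjugate if and only if some affine map carries the roots of one to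
the roots of the other, matching multiplicities. -/
theorem newton_maps_affinely_conjugate_iff
    (n p : ℕ) (hn : 1 ≤ n) (hp : 1 ≤ p)
    (r : Fin n → ℂ) (hr : Function.Injective r)
    (m : Fin n → ℕ) (hm : ∀ i, 0 < m i)
    (s : Fin p → ℂ) (hs : Function.Injective s)
    (k : Fin p → ℕ) (hk : ∀ j, 0 < k j) :
    (∃ a b : ℂ, a ≠ 0 ∧ ∃ F : Finset ℂ, ∀ z : ℂ, z ∉ F →
        newtonDenom n r m z ≠ 0 ∧
        newtonDenom p s k (a * z + b) ≠ 0 ∧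
        reducedNewton p s k (a * z + b) = a * reducedNewton n r m z + b) ↔
    (∃ a b : ℂ, a ≠ 0 ∧ ∃ σ : Fin n ≃ Fin p,
        ∀ i, a * r i + b = s (σ i) ∧ m i = k (σ i)) :=
  newton_maps_affinely_conjugate_iff_general n p hn r hr m hm s hs k hk
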